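/- arXiv:2208.14859 — 2 statements merged into one kernel-verified Lean document; each statement's English description precedes it below -/
import Mathlib

section
/- Let C ≥ 1, γ ∈ (0, 1], λ ∈ (0, 1/(480 C²)], M ≥ 0 and k ∈ ℕ. Then there exists ε > 0 with the following property. Let f : [0, ∞) → [0, ∞) be continuous and set h(t) := sup_{s ∈ [0, t]} f(s) + ∫₀^t f(s) ds. Suppose that for every t > 0 with h(t) ≤ γ and every τ ∈ [0, t] one has f(t) + λ ∫_τ^t f ≤ C (1 + λ²(t − τ)) f(τ) + C λ² ∫_τ^t f + h(t) · M · (1 + C + λ + (t − τ))^k · ( f(τ) + f(t) + ∫_τ^t f )². Then the condition f(0) ≤ ε implies f(t) ≤ 30 C ε e^{−λ t/(2C)} for all t ≥ 0. -/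
/-!
As long as `f ≤ 30 C ε e^{-λt/(2C)}`, both `h(t)` and every `∫_τ^t f` are `O(C² ε / λ)`, so for
`ε` small the quadratic error is at most `λ/100 · (f(τ) + f(t) + ∫_τ^t f)` and can be absorbed,
leaving `f(t) + (9λ/10) ∫_τ^t f ≤ (11C/10)(1 + λ²(t - τ)) f(τ)` on windows `t - τ ≤ 1/(2λ²)`.
With the integrating factor `(1 + λ²(t - τ))^{-p}`, `p = 9/(11Cλ)`, this gives a Gronwall bound
under which `f` shrinks by `e^{-λΔ/(2C)}` across each window of length `Δ = 1/(2λ²)` (the factor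
`C` is beaten because `Cλ ≤ 1/480`). Chaining windows yields `f ≤ 2Cε e^{-λt/(2C)}`, strictly
below the assumed bound, and continuity closes the bootstrap.
-/

open Set Real Filter Topology

theorem one_add_rpow_neg_le_exp {x p : ℝ} (hx0 : 0 ≤ x) (hx1 : x ≤ 1) (hp : 0 ≤ p) :
    (1 + x) ^ (-p) ≤ exp (-(2 / 3 * p * x)) := by
  have hlog : 2 / 3 * x ≤ log (1 + x) := by
    refine le_trans ?_ (le_log_one_add_of_nonneg hx0)
    rw [le_div_iff₀ (by linarith)]; nlinarith
  rw [rpow_def_of_pos (by linarith)]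
  gcongr
  nlinarith

theorem le_mul_rpow_of_add_integral_le {g : ℝ → ℝ} {a b A κ c : ℝ} (hab : a ≤ b)
    (hg : ContinuousOn g (Icc a b)) (hA : 0 < A) (hκ : 0 ≤ κ) (hc : 0 < c)
    (h : ∀ τ ∈ Icc a b, g b + κ * ∫ s in τ..b, g s ≤ A * (1 + c * (b - τ)) * g τ) :
    g b ≤ A * (1 + c * (b - a)) ^ (1 - κ / (A * c)) * g a := by
  set p := κ / (A * c)
  set u : ℝ → ℝ := fun τ => 1 + c * (b - τ)
  set ψ : ℝ → ℝ := fun τ => g b + κ * ∫ s in τ..b, g s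
  have hu : ∀ τ ∈ Icc a b, 0 < u τ := fun τ hτ => by
    have := mul_nonneg hc.le (sub_nonneg.2 hτ.2); simp only [u]; linarith
  have hψ : ∀ τ ∈ Ioo a b, HasDerivAt ψ (-(κ * g τ)) τ := fun τ hτ => by
    have hsub : uIcc τ b ⊆ Icc a b := by
      rw [uIcc_of_le hτ.2.le]; exact Icc_subset_Icc_left hτ.1.le
    have := intervalIntegral.integral_hasDerivAt_left (hg.mono hsub).intervalIntegrable
      ((hg.mono Ioo_subset_Icc_self).stronglyMeasurableAtFilter isOpen_Ioo τ hτ)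
      (hg.continuousAt (Icc_mem_nhds hτ.1 hτ.2))
    exact ((this.const_mul κ).const_add (g b)).congr_deriv (by ring)
  have hψ_cont : ContinuousOn ψ (Icc a b) := by
    have := intervalIntegral.continuousOn_primitive_interval_left
      (μ := MeasureTheory.volume) (hg.integrableOn_Icc.mono_set (uIcc_of_le hab).subset)
    rw [uIcc_of_le hab] at this
    exact continuousOn_const.add (continuousOn_const.mul this)
  -- `(ψ u^{-p})' = u^{-p-1} (p c ψ - κ u g) ≤ 0`, because `p c A = κ`
  have hanti : AntitoneOn (fun τ => ψ τ * u τ ^ (-p)) (Icc a b) := by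
    refine antitoneOn_of_hasDerivWithinAt_nonpos (convex_Icc a b)
      (hψ_cont.mul (ContinuousOn.rpow_const (by fun_prop) fun τ hτ => Or.inl (hu τ hτ).ne'))
      (f' := fun τ => -(κ * g τ) * u τ ^ (-p) + ψ τ * (-c * (-p) * u τ ^ (-p - 1))) ?_ ?_
    · intro τ hτ
      rw [interior_Icc] at hτ
      have hu' : HasDerivAt u (-c) τ :=
        ((((hasDerivAt_id τ).const_sub b).const_mul c).const_add 1).congr_deriv (by ring)
      exact ((hψ τ hτ).mul
        (hu'.rpow_const (Or.inl (hu τ (Ioo_subset_Icc_self hτ)).ne'))).hasDerivWithinAt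
    · intro τ hτ
      rw [interior_Icc] at hτ
      have huτ := hu τ (Ioo_subset_Icc_self hτ)
      have hpA : p * c * A = κ := by simp only [p]; field_simp
      have hsplit : u τ ^ (-p) = u τ ^ (-p - 1) * u τ := by
        rw [← rpow_add_one huτ.ne']; norm_num
      have key : p * c * ψ τ ≤ κ * (u τ * g τ) :=
        calc p * c * ψ τ ≤ p * c * (A * u τ * g τ) := by
              gcongr; exact h τ (Ioo_subset_Icc_self hτ)
          _ = κ * (u τ * g τ) := by rw [← hpA]; ring
      have : -(κ * g τ) * u τ ^ (-p) + ψ τ * (-c * (-p) * u τ ^ (-p - 1))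
          = u τ ^ (-p - 1) * (p * c * ψ τ - κ * (u τ * g τ)) := by rw [hsplit]; ring
      rw [this]
      exact mul_nonpos_of_nonneg_of_nonpos (rpow_nonneg huτ.le _) (by linarith)
  have ha : a ∈ Icc a b := left_mem_Icc.2 hab
  calc g b = ψ b * u b ^ (-p) := by simp [ψ, u]
    _ ≤ ψ a * u a ^ (-p) := hanti ha (right_mem_Icc.2 hab) hab
    _ ≤ A * u a * g a * u a ^ (-p) := by gcongr; exact h a ha
    _ = A * u a ^ (1 - p) * g a := by
      rw [rpow_sub (hu a ha), rpow_one, rpow_neg (hu a ha).le]; ring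

theorem integral_le_div_of_le_mul_exp {f : ℝ → ℝ} {a b β c : ℝ} (ha : 0 ≤ a) (hab : a ≤ b)
    (hc : 0 < c) (hβ : 0 ≤ β) (hf : ContinuousOn f (Icc a b))
    (hfle : ∀ s ∈ Icc a b, f s ≤ β * exp (-(c * s))) :
    ∫ s in a..b, f s ≤ β / c := by
  have hprim : ∀ s ∈ uIcc a b, HasDerivAt (fun s => -exp (-(c * s)) / c) (exp (-(c * s))) s :=
    fun s _ => (((hasDerivAt_id s).const_mul c).neg.exp.neg.div_const c).congr_deriv
      (by field_simp; simp)
  calc ∫ s in a..b, f s ≤ ∫ s in a..b, β * exp (-(c * s)) :=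
        intervalIntegral.integral_mono_on hab (hf.intervalIntegrable_of_Icc hab)
          (by apply Continuous.intervalIntegrable; fun_prop) hfle
    _ = β * ((exp (-(c * a)) - exp (-(c * b))) / c) := by
        rw [intervalIntegral.integral_const_mul,
          intervalIntegral.integral_eq_sub_of_hasDerivAt hprim
            (by apply Continuous.intervalIntegrable; fun_prop)]
        ring
    _ ≤ β / c := by
        rw [mul_div_assoc']
        gcongr
        refine mul_le_of_le_one_right hβ ?_
        have : exp (-(c * a)) ≤ 1 := exp_le_one_iff.2 (by nlinarith)
        linarith [exp_pos (-(c * b))]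

theorem le_mul_exp_of_init_of_step {u : ℝ → ℝ} {D c K T : ℝ} (hD : 0 < D) (hT : 0 ≤ T)
    (hinit : ∀ t ∈ Icc 0 T, t ≤ D → u t ≤ K * exp (-(c * t)))
    (hstep : ∀ t ∈ Icc D T, u t ≤ exp (-(c * D)) * u (t - D)) :
    u T ≤ K * exp (-(c * T)) := by
  suffices ∀ n : ℕ, ∀ t ∈ Icc 0 T, t ≤ n * D → u t ≤ K * exp (-(c * t)) by
    obtain ⟨n, hn⟩ := exists_nat_ge (T / D)
    exact this n T ⟨hT, le_rfl⟩ ((div_le_iff₀ hD).1 hn)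
  intro n
  induction n with
  | zero => intro t ht htn; exact hinit t ht (by simp only [Nat.cast_zero, zero_mul] at htn; linarith)
  | succ n ih =>
    intro t ht htn
    rcases le_or_gt t D with htD | hDt
    · exact hinit t ht htD
    calc u t ≤ exp (-(c * D)) * u (t - D) := hstep t ⟨hDt.le, ht.2⟩
      _ ≤ exp (-(c * D)) * (K * exp (-(c * (t - D)))) := by
        gcongr
        exact ih (t - D) ⟨by linarith, by linarith [ht.2]⟩ (by push_cast at htn; linarith)
      _ = K * exp (-(c * t)) := by rw [mul_left_comm, ← exp_add]; ring_nf

theorem le_of_forall_Icc_le_imp_lt {f B : ℝ → ℝ} (hf : ContinuousOn f (Ici 0))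
    (hB : ContinuousOn B (Ici 0)) (h0 : f 0 ≤ B 0)
    (h : ∀ T ≥ 0, (∀ s ∈ Icc 0 T, f s ≤ B s) → f T < B T) {t : ℝ} (ht : 0 ≤ t) :
    f t ≤ B t := by
  by_contra! hbad
  set S := {s | 0 ≤ s ∧ B s < f s}
  have hS : S.Nonempty := ⟨t, ht, hbad⟩
  have hSbdd : BddBelow S := ⟨0, fun s hs => hs.1⟩
  set t₀ := sInf S
  have ht₀ : 0 ≤ t₀ := le_csInf hS fun s hs => hs.1
  have hbelow : ∀ s ∈ Ico 0 t₀, f s ≤ B s := fun s hs =>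
    not_lt.1 fun hlt => notMem_of_lt_csInf hs.2 hSbdd ⟨hs.1, hlt⟩
  have hgood : ∀ s ∈ Icc 0 t₀, f s ≤ B s := by
    rcases ht₀.eq_or_lt with h₀ | hpos
    · intro s hs
      obtain rfl : s = 0 := le_antisymm (hs.2.trans h₀.ge) hs.1
      exact h0
    have hclosed : IsClosed (Ici 0 ∩ (fun s => f s - B s) ⁻¹' Iic 0) :=
      (hf.sub hB).preimage_isClosed_of_isClosed isClosed_Ici isClosed_Iic
    have hsub : Ico 0 t₀ ⊆ Ici 0 ∩ (fun s => f s - B s) ⁻¹' Iic 0 :=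
      fun s hs => ⟨hs.1, sub_nonpos.2 (hbelow s hs)⟩
    have := closure_minimal hsub hclosed
    rw [closure_Ico hpos.ne] at this
    exact fun s hs => sub_nonpos.1 (this hs).2
  have hev : ∀ᶠ s in 𝓝[≥] t₀, f s < B s :=
    ((hf.sub hB).continuousWithinAt ht₀).mono (Ici_subset_Ici.2 ht₀)
      |>.eventually (gt_mem_nhds (sub_neg.2 (h t₀ ht₀ hgood))) |>.mono fun s hs => sub_neg.1 hs
  obtain ⟨t₁, ht₁, hsub⟩ := mem_nhdsGE_iff_exists_Ico_subset.1 hev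
  have : t₁ ≤ t₀ := le_csInf hS fun s hs => by
    by_contra! hst
    exact lt_asymm hs.2 (hsub ⟨csInf_le hSbdd hs, hst⟩)
  exact (not_le.2 ht₁) this

theorem exists_pos_le_and_sq_mul_le {γ η X : ℝ} (hγ : 0 < γ) (hη : 0 < η) :
    ∃ δ > 0, δ ≤ γ ∧ δ ^ 2 * X ≤ η := by
  have hlim : Tendsto (fun δ : ℝ => δ ^ 2 * X) (𝓝[>] 0) (𝓝 0) :=
    ((by fun_prop : Continuous fun δ : ℝ => δ ^ 2 * X).tendsto' 0 0 (by simp)).mono_left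
      nhdsWithin_le_nhds
  obtain ⟨δ, ⟨hδ0, hδγ⟩, hδ⟩ :=
    ((eventually_mem_set.2 (Ioc_mem_nhdsGT hγ)).and (hlim.eventually (ge_mem_nhds hη))).exists
  exact ⟨δ, hδ0, hδγ, hδ⟩

theorem error_term_le {h M P P₀ S δ lam : ℝ} {k : ℕ} (hM : 0 ≤ M) (hP : 0 ≤ P)
    (hPP₀ : P ≤ P₀) (hS : 0 ≤ S) (hSδ : S ≤ 2 * δ) (hh : h ≤ δ)
    (hδ : δ ^ 2 * (200 * M * P₀ ^ k) ≤ lam) :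
    h * M * P ^ k * S ^ 2 ≤ lam / 100 * S := by
  have hδ0 : 0 ≤ δ := by linarith
  have hP₀ : 0 ≤ P₀ := hP.trans hPP₀
  calc h * M * P ^ k * S ^ 2 ≤ δ * M * P₀ ^ k * (2 * δ * S) := by
        rw [sq]; gcongr
    _ = δ ^ 2 * (200 * M * P₀ ^ k) / 100 * S := by ring
    _ ≤ lam / 100 * S := by gcongr

theorem absorb_error_term {C lam u x y I E : ℝ} (hC : 1 ≤ C) (hlam0 : 0 < lam)
    (hlam : lam ≤ 1 / (480 * C ^ 2)) (hu : 1 ≤ u) (hx : 0 ≤ x) (hy : 0 ≤ y) (hI : 0 ≤ I)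
    (hE : E ≤ lam / 100 * (x + y + I)) (h : y + lam * I ≤ C * u * x + C * lam ^ 2 * I + E) :
    y + 9 * lam / 10 * I ≤ 11 * C / 10 * u * x := by
  rw [le_div_iff₀ (by positivity)] at hlam
  have hCl : C * lam ≤ 1 / 480 := by nlinarith
  have hI' : C * lam ^ 2 * I ≤ lam * I / 480 := by
    have := mul_le_mul_of_nonneg_right hCl (mul_nonneg hlam0.le hI); nlinarith
  have hx' : lam * x ≤ C * u * x := mul_le_mul_of_nonneg_right (by nlinarith) hx
  have hy' : lam * y ≤ y := mul_le_of_le_one_left hy (by nlinarith)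
  nlinarith

/-- `h(t)` in the paper. -/
noncomputable def supAddIntegral (f : ℝ → ℝ) (t : ℝ) : ℝ :=
  sSup (f '' Icc 0 t) + ∫ s in (0 : ℝ)..t, f s

def SatisfiesOdeIneq (C γ lam M : ℝ) (k : ℕ) (f : ℝ → ℝ) : Prop :=
  ∀ t > (0 : ℝ), supAddIntegral f t ≤ γ → ∀ τ ∈ Icc (0 : ℝ) t,
    f t + lam * ∫ s in τ..t, f s ≤
      C * (1 + lam ^ 2 * (t - τ)) * f τ + C * lam ^ 2 * (∫ s in τ..t, f s) +
        supAddIntegral f t * M * (1 + C + lam + (t - τ)) ^ k *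
          (f τ + f t + (∫ s in τ..t, f s)) ^ 2

/-- The inequality of `SatisfiesOdeIneq` once its quadratic error term has been absorbed. -/
def LinearOdeIneq (C lam : ℝ) (f : ℝ → ℝ) (τ t : ℝ) : Prop :=
  f t + 9 * lam / 10 * ∫ s in τ..t, f s ≤ 11 * C / 10 * (1 + lam ^ 2 * (t - τ)) * f τ

theorem le_mul_exp_of_linearOdeIneq_on {g : ℝ → ℝ} {C lam a b : ℝ} (hC : 0 < C)
    (hlam : 0 < lam) (hab : a ≤ b) (hba : b - a ≤ 1 / (2 * lam ^ 2))
    (hg : ContinuousOn g (Icc a b)) (hga : 0 ≤ g a) (h : ∀ τ ∈ Icc a b, LinearOdeIneq C lam g τ b) :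
    g b ≤ 33 * C / 20 * exp (-(6 / 11 * lam * (b - a) / C)) * g a := by
  set x := lam ^ 2 * (b - a)
  set p := 9 * lam / 10 / (11 * C / 10 * lam ^ 2)
  have hx0 : 0 ≤ x := by positivity
  have hx : x ≤ 1 / 2 :=
    calc x ≤ lam ^ 2 * (1 / (2 * lam ^ 2)) := mul_le_mul_of_nonneg_left hba (by positivity)
      _ = 1 / 2 := by field_simp
  calc g b ≤ 11 * C / 10 * (1 + x) ^ (1 - p) * g a :=
        le_mul_rpow_of_add_integral_le hab hg (by positivity) (by positivity) (by positivity) h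
    _ = 11 * C / 10 * (1 + x) * (1 + x) ^ (-p) * g a := by
        rw [sub_eq_add_neg, rpow_add (by linarith), rpow_one]; ring
    _ ≤ 11 * C / 10 * (3 / 2) * exp (-(2 / 3 * p * x)) * g a := by
        gcongr
        · linarith
        · exact one_add_rpow_neg_le_exp hx0 (by linarith) (by positivity)
    _ = 33 * C / 20 * exp (-(6 / 11 * lam * (b - a) / C)) * g a := by
        have hpx : 2 / 3 * p * x = 6 / 11 * lam * (b - a) / C := by
          simp only [p, x]; field_simp; ring
        rw [hpx]; ring

theorem le_mul_exp_of_linearOdeIneq {f : ℝ → ℝ} {C lam ε T : ℝ} (hC : 1 ≤ C) (hlam0 : 0 < lam)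
    (hlam : lam ≤ 1 / (480 * C ^ 2)) (hT : 0 ≤ T) (hf : ContinuousOn f (Icc 0 T))
    (hf0 : ∀ t ∈ Icc 0 T, 0 ≤ f t) (hfε : f 0 ≤ ε)
    (hlin : ∀ t ∈ Ioc 0 T, ∀ τ ∈ Icc 0 t, t - τ ≤ 1 / (2 * lam ^ 2) → LinearOdeIneq C lam f τ t) :
    f T ≤ 2 * C * ε * exp (-(lam / (2 * C) * T)) := by
  have hC0 : 0 < C := by linarith
  have hε : 0 ≤ ε := (hf0 0 ⟨le_rfl, hT⟩).trans hfε
  set D := 1 / (2 * lam ^ 2)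
  have hD : 0 < D := by positivity
  have hwindow : ∀ a t, 0 ≤ a → a < t → t ≤ T → t - a ≤ D →
      f t ≤ 33 * C / 20 * exp (-(6 / 11 * lam * (t - a) / C)) * f a :=
    fun a t ha hat htT htD => le_mul_exp_of_linearOdeIneq_on hC0 hlam0 hat.le htD
      (hf.mono (Icc_subset_Icc ha htT)) (hf0 a ⟨ha, hat.le.trans htT⟩)
      fun τ hτ => hlin t ⟨ha.trans_lt hat, htT⟩ τ ⟨ha.trans hτ.1, hτ.2⟩ (by linarith [hτ.1])
  -- with `y = 1 / (44 C λ) ≥ 10 C`, a full window contracts by `33C/20 · e^{-12y} ≤ e^{-11y}`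
  have hcontract : 33 * C / 20 * exp (-(6 / 11 * lam * D / C)) ≤ exp (-(lam / (2 * C) * D)) := by
    set y := 1 / (44 * C * lam)
    have hy : 33 * C / 20 ≤ exp y := by
      have : 10 * C ≤ y := by
        rw [le_div_iff₀ (by positivity)]
        rw [le_div_iff₀ (by positivity)] at hlam
        nlinarith
      linarith [add_one_le_exp y]
    have h12 : 6 / 11 * lam * D / C = 12 * y := by simp only [D, y]; field_simp; ring
    have h11 : lam / (2 * C) * D = 11 * y := by simp only [D, y]; field_simp; ring
    calc 33 * C / 20 * exp (-(6 / 11 * lam * D / C)) ≤ exp y * exp (-(12 * y)) := by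
          rw [h12]; exact mul_le_mul_of_nonneg_right hy (exp_pos _).le
      _ = exp (-(lam / (2 * C) * D)) := by rw [← exp_add, h11]; ring_nf
  refine le_mul_exp_of_init_of_step hD hT (fun t ht htD => ?_) (fun t ht => ?_)
  · rcases ht.1.eq_or_lt with rfl | ht0
    · simp only [mul_zero, neg_zero, exp_zero, mul_one]
      exact hfε.trans (le_mul_of_one_le_left hε (by linarith))
    have hexp : exp (-(6 / 11 * lam * (t - 0) / C)) ≤ exp (-(lam / (2 * C) * t)) := by
      have : 6 / 11 * lam * (t - 0) / C = lam / (2 * C) * t + lam * t / (22 * C) := by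
        field_simp; ring
      rw [exp_le_exp, this]
      linarith [show 0 ≤ lam * t / (22 * C) by positivity]
    calc f t ≤ 33 * C / 20 * exp (-(6 / 11 * lam * (t - 0) / C)) * f 0 :=
          hwindow 0 t le_rfl ht0 ht.2 (by linarith)
      _ ≤ 2 * C * exp (-(lam / (2 * C) * t)) * ε :=
          mul_le_mul (mul_le_mul (by linarith) hexp (exp_pos _).le (by positivity)) hfε
            (hf0 0 ⟨le_rfl, hT⟩) (by positivity)
      _ = 2 * C * ε * exp (-(lam / (2 * C) * t)) := by ring
  · calc f t ≤ 33 * C / 20 * exp (-(6 / 11 * lam * (t - (t - D)) / C)) * f (t - D) :=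
          hwindow (t - D) t (by linarith [ht.1]) (by linarith) ht.2 (by linarith)
      _ ≤ exp (-(lam / (2 * C) * D)) * f (t - D) := by
          rw [sub_sub_cancel]
          gcongr
          exact hf0 _ ⟨by linarith [ht.1], by linarith [ht.2]⟩

theorem linearOdeIneq_of_bootstrap {f : ℝ → ℝ} {C γ lam M ε δ T τ : ℝ} {k : ℕ} (hC : 1 ≤ C)
    (hlam0 : 0 < lam) (hlam : lam ≤ 1 / (480 * C ^ 2)) (hM : 0 ≤ M) (hε : 0 ≤ ε)
    (hεδ : 90 * (C ^ 2 * ε / lam) ≤ δ) (hδγ : δ ≤ γ)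
    (hδM : δ ^ 2 * (200 * M * (2 + C + 1 / (2 * lam ^ 2)) ^ k) ≤ lam)
    (hode : SatisfiesOdeIneq C γ lam M k f) (hf : ContinuousOn f (Icc 0 T))
    (hf0 : ∀ t ∈ Icc 0 T, 0 ≤ f t) (hT : 0 < T)
    (hboot : ∀ s ∈ Icc 0 T, f s ≤ 30 * C * ε * exp (-(lam / (2 * C) * s)))
    (hτ : τ ∈ Icc 0 T) (hτT : T - τ ≤ 1 / (2 * lam ^ 2)) :
    LinearOdeIneq C lam f τ T := by
  have hC0 : 0 < C := by linarith
  have hlam1 : lam ≤ 1 := by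
    rw [le_div_iff₀ (by positivity)] at hlam; nlinarith
  have hCε : C * ε ≤ C ^ 2 * ε / lam := by
    rw [le_div_iff₀ hlam0]; nlinarith [mul_nonneg hC0.le hε]
  have hle : ∀ s ∈ Icc 0 T, f s ≤ 30 * C * ε := fun s hs =>
    (hboot s hs).trans <| mul_le_of_le_one_right (by positivity) <|
      exp_le_one_iff.2 <| neg_nonpos.2 <| by have := hs.1; positivity
  have hint : ∀ a ∈ Icc 0 T, ∫ s in a..T, f s ≤ 60 * (C ^ 2 * ε / lam) := fun a ha =>
    (integral_le_div_of_le_mul_exp ha.1 ha.2 (by positivity) (by positivity)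
      (hf.mono (Icc_subset_Icc_left ha.1)) fun s hs => hboot s ⟨ha.1.trans hs.1, hs.2⟩).trans_eq
      (by field_simp; ring)
  have hsup : sSup (f '' Icc 0 T) ≤ 30 * C * ε :=
    csSup_le ((nonempty_Icc.2 hT.le).image f) (forall_mem_image.2 hle)
  have hh : supAddIntegral f T ≤ δ := by
    have := hint 0 (left_mem_Icc.2 hT.le)
    unfold supAddIntegral; linarith
  have hT' : T ∈ Icc 0 T := right_mem_Icc.2 hT.le
  have hI0 : 0 ≤ ∫ s in τ..T, f s :=
    intervalIntegral.integral_nonneg hτ.2 fun s hs => hf0 s ⟨hτ.1.trans hs.1, hs.2⟩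
  have hfτ := hf0 τ hτ
  have hfT := hf0 T hT'
  have hS : f τ + f T + ∫ s in τ..T, f s ≤ 2 * δ := by linarith [hint τ hτ, hle τ hτ, hle T hT']
  exact absorb_error_term hC hlam0 hlam (by nlinarith [hτ.2]) hfτ hfT hI0
    (error_term_le hM (by linarith [hτ.2]) (by linarith [hτ.1]) (by linarith) hS hh hδM)
    (hode T hT (hh.trans hδγ) τ hτ)

/-- Lemma 3 (ODE-type lemma) with an explicit instance of the error term
`h(t)·O(f)`, where `O(f) = M · (1 + C + λ + (t − τ))^k · (f(τ) + f(t) + ∫_τ^t f)²`. -/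
theorem ode_type_lemma (C γ lam M : ℝ) (k : ℕ)
    (hC : 1 ≤ C) (hγ : γ ∈ Set.Ioc (0 : ℝ) 1)
    (hlam : lam ∈ Set.Ioc (0 : ℝ) (1 / (480 * C ^ 2))) (hM : 0 ≤ M) :
    ∃ ε > (0 : ℝ), ∀ f : ℝ → ℝ,
      ContinuousOn f (Set.Ici 0) →
      (∀ t ≥ (0 : ℝ), 0 ≤ f t) →
      (∀ t > (0 : ℝ),
        sSup (f '' Set.Icc 0 t) + (∫ s in (0 : ℝ)..t, f s) ≤ γ →
        ∀ τ ∈ Set.Icc (0 : ℝ) t,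
          f t + lam * ∫ s in τ..t, f s ≤
            C * (1 + lam ^ 2 * (t - τ)) * f τ + C * lam ^ 2 * (∫ s in τ..t, f s) +
              (sSup (f '' Set.Icc 0 t) + (∫ s in (0 : ℝ)..t, f s)) * M *
                (1 + C + lam + (t - τ)) ^ k *
                (f τ + f t + (∫ s in τ..t, f s)) ^ 2) →
      f 0 ≤ ε →
      ∀ t ≥ (0 : ℝ), f t ≤ 30 * C * ε * Real.exp (-(lam * t) / (2 * C)) := by
  obtain ⟨hlam0, hlamC⟩ := hlam
  have hC0 : 0 < C := by linarith
  obtain ⟨δ, hδ0, hδγ, hδM⟩ := exists_pos_le_and_sq_mul_le hγ.1 hlam0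
    (X := 200 * M * (2 + C + 1 / (2 * lam ^ 2)) ^ k)
  set ε := lam * δ / (90 * C ^ 2)
  have hε : 0 < ε := by positivity
  have hεδ : 90 * (C ^ 2 * ε / lam) ≤ δ := le_of_eq (by simp only [ε]; field_simp)
  refine ⟨ε, hε, fun f hf hf0 hode hfε t ht => ?_⟩
  simp only [show ∀ s, -(lam * s) / (2 * C) = -(lam / (2 * C) * s) from fun s => by ring]
  refine le_of_forall_Icc_le_imp_lt (B := fun s => 30 * C * ε * exp (-(lam / (2 * C) * s))) hf
    (by fun_prop) ?_ (fun T hT hboot => ?_) ht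
  · simp only [mul_zero, neg_zero, exp_zero, mul_one]
    exact hfε.trans (le_mul_of_one_le_left hε.le (by linarith))
  calc f T ≤ 2 * C * ε * exp (-(lam / (2 * C) * T)) :=
        le_mul_exp_of_linearOdeIneq hC hlam0 hlamC hT (hf.mono Icc_subset_Ici_self)
          (fun s hs => hf0 s hs.1) hfε fun t ht τ hτ hτt =>
            linearOdeIneq_of_bootstrap hC hlam0 hlamC hM hε.le hεδ hδγ hδM hode
              (hf.mono Icc_subset_Ici_self) (fun s hs => hf0 s hs.1) ht.1
              (fun s hs => hboot s ⟨hs.1, hs.2.trans ht.2⟩) hτ hτt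
    _ < 30 * C * ε * exp (-(lam / (2 * C) * T)) := by gcongr; norm_num
end

section
/- Let η : ℝ³ → ℝ³ be twice continuously differentiable and suppose that the map x ↦ η(x) − x is 1-periodic in the variables x₁ and x₂. Define a_{3i}(x) = (1/2) Σ_{m,n,k,l=1}^{3} ε_{3mn} ε_{ikl} ∂_m η_k(x) ∂_n η_l(x). Then for every c ∈ ℝ and every i ∈ {1, 2}, ∫_{[0,1]²} a_{3i}(x₁, x₂, c) dx₁ dx₂ = 0. -/
/-
The integrand is a null Lagrangian: for `f = η_a`, `g = η_b` it is the Jacobian minor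
`∂₁f ∂₂g - ∂₂f ∂₁g = ∂₁(f ∂₂g) - ∂₂(f ∂₁g)` (symmetry of second derivatives), so its integral
over the unit square is a sum of boundary terms. As `η - id` is periodic in `x₁, x₂`, each `η_a`
jumps by `δ_{ma}` across a period in direction `m` while `∇η` is periodic, and the boundary terms
add up to `δ_{1a} δ_{2b} - δ_{2a} δ_{1b}`. For `a_{31}` and `a_{32}` the pair `(a, b)` is
`(2, 3)` resp. `(3, 1)`, where this vanishes.
-/

/-- The Levi-Civita symbol on three indices: the sign of the permutation
`(i, j, k)` of `(1, 2, 3)`, and `0` if any two indices coincide. -/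
noncomputable def leviCivita (i j k : Fin 3) : ℝ :=
  (((j : ℕ) : ℝ) - ((i : ℕ) : ℝ)) * (((k : ℕ) : ℝ) - ((i : ℕ) : ℝ)) *
    (((k : ℕ) : ℝ) - ((j : ℕ) : ℝ)) / 2

open MeasureTheory

theorem intervalIntegral_integral_swap_of_continuous {f : ℝ → ℝ → ℝ}
    (hf : Continuous fun p : ℝ × ℝ => f p.1 p.2) {a b c d : ℝ} (hab : a ≤ b) (hcd : c ≤ d) :
    ∫ s in a..b, ∫ t in c..d, f s t = ∫ t in c..d, ∫ s in a..b, f s t := by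
  have hint : Integrable (Function.uncurry f)
      ((volume.restrict (Set.Ioc a b)).prod (volume.restrict (Set.Ioc c d))) := by
    rw [Measure.prod_restrict, ← Measure.volume_eq_prod]
    exact (hf.continuousOn.integrableOn_compact (isCompact_Icc.prod isCompact_Icc)).mono_set
      (Set.prod_mono Set.Ioc_subset_Icc_self Set.Ioc_subset_Icc_self)
  simp only [intervalIntegral.integral_of_le hab, intervalIntegral.integral_of_le hcd]
  exact integral_integral_swap hint

theorem intervalIntegral_integral_sub_of_continuous {f g : ℝ → ℝ → ℝ}
    (hf : Continuous fun p : ℝ × ℝ => f p.1 p.2) (hg : Continuous fun p : ℝ × ℝ => g p.1 p.2)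
    {a b c d : ℝ} :
    ∫ s in a..b, ∫ t in c..d, (f s t - g s t)
      = (∫ s in a..b, ∫ t in c..d, f s t) - ∫ s in a..b, ∫ t in c..d, g s t := by
  have hsec {h : ℝ → ℝ → ℝ} (hh : Continuous fun p : ℝ × ℝ => h p.1 p.2) (s : ℝ) :
      Continuous (h s) := hh.comp (Continuous.prodMk_right s)
  have hpar {h : ℝ → ℝ → ℝ} (hh : Continuous fun p : ℝ × ℝ => h p.1 p.2) :
      Continuous fun s => ∫ t in c..d, h s t :=
    intervalIntegral.continuous_parametric_intervalIntegral_of_continuous' hh c d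
  simp_rw [intervalIntegral.integral_sub ((hsec hf _).intervalIntegrable c d)
    ((hsec hg _).intervalIntegrable c d)]
  exact intervalIntegral.integral_sub ((hpar hf).intervalIntegrable a b)
    ((hpar hg).intervalIntegrable a b)

theorem fderiv_add_eq_of_add_const {𝕜 E F : Type*} [NontriviallyNormedField 𝕜]
    [NormedAddCommGroup E] [NormedSpace 𝕜 E] [NormedAddCommGroup F] [NormedSpace 𝕜 F]
    {f : E → F} {v : E} {α : F} (hf : ∀ x, f (x + v) = f x + α) (x : E) :
    fderiv 𝕜 f (x + v) = fderiv 𝕜 f x := by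
  rw [← fderiv_comp_add_right, funext hf, fderiv_add_const]

section

variable {E : Type*} [NormedAddCommGroup E] [NormedSpace ℝ E]

theorem integral_fderiv_apply_add_smul {F : Type*} [NormedAddCommGroup F] [NormedSpace ℝ F]
    [CompleteSpace F] {f : E → F} (hf : ContDiff ℝ 1 f) (y v : E) :
    ∫ t in (0:ℝ)..1, fderiv ℝ f (y + t • v) v = f (y + v) - f y := by
  have hderiv (t : ℝ) :
      HasDerivAt (fun t : ℝ => f (y + t • v)) (fderiv ℝ f (y + t • v) v) t := by
    have hline : HasDerivAt (fun t : ℝ => y + t • v) v t := by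
      simpa using ((hasDerivAt_id t).smul_const v).const_add y
    exact (hf.differentiable one_ne_zero _).hasFDerivAt.comp_hasDerivAt t hline
  have hcont : Continuous fun t : ℝ => fderiv ℝ f (y + t • v) v :=
    ((hf.continuous_fderiv one_ne_zero).clm_apply continuous_const).comp (by fun_prop)
  simpa using intervalIntegral.integral_eq_sub_of_hasDerivAt (fun t _ => hderiv t)
    (hcont.intervalIntegrable 0 1)

theorem fderiv_fderiv_apply_comm {g : E → ℝ} (hg : ContDiff ℝ 2 g) (x v w : E) :
    fderiv ℝ (fun y => fderiv ℝ g y w) x v = fderiv ℝ (fun y => fderiv ℝ g y v) x w := by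
  have hd : DifferentiableAt ℝ (fderiv ℝ g) x :=
    (hg.fderiv_right (m := 1) le_rfl).differentiable one_ne_zero x
  simp only [fderiv_clm_apply hd (differentiableAt_const _)]
  simpa using hg.contDiffAt.isSymmSndFDerivAt (by simp) v w

theorem fderiv_mul_fderiv_sub_fderiv_mul_fderiv {f g : E → ℝ} (hf : Differentiable ℝ f)
    (hg : ContDiff ℝ 2 g) (x v w : E) :
    fderiv ℝ f x v * fderiv ℝ g x w - fderiv ℝ f x w * fderiv ℝ g x v
      = fderiv ℝ (fun y => f y * fderiv ℝ g y w) x v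
        - fderiv ℝ (fun y => f y * fderiv ℝ g y v) x w := by
  have hdg (u : E) : DifferentiableAt ℝ (fun y => fderiv ℝ g y u) x :=
    ((hg.fderiv_right (m := 1) le_rfl).clm_apply contDiff_const).differentiable one_ne_zero x
  rw [fderiv_fun_mul (hf x) (hdg w), fderiv_fun_mul (hf x) (hdg v)]
  simp only [add_apply, smul_apply, smul_eq_mul]
  rw [fderiv_fderiv_apply_comm hg x v w]
  ring

theorem integral_integral_fderiv_mul_fderiv_of_add_const {f g : E → ℝ} (hf : ContDiff ℝ 1 f)
    (hg : ContDiff ℝ 2 g) {v w : E} {α β γ : ℝ} (hfv : ∀ x, f (x + v) = f x + α)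
    (hgv : ∀ x, g (x + v) = g x + β) (hgw : ∀ x, g (x + w) = g x + γ) (p : E) :
    ∫ t in (0:ℝ)..1, ∫ s in (0:ℝ)..1,
      fderiv ℝ (fun x => f x * fderiv ℝ g x w) (p + t • w + s • v) v = α * γ := by
  have hdgw : ContDiff ℝ 1 fun x => fderiv ℝ g x w :=
    (hg.fderiv_right (m := 1) le_rfl).clm_apply contDiff_const
  have hjump (y : E) :
      f (y + v) * fderiv ℝ g (y + v) w - f y * fderiv ℝ g y w = α * fderiv ℝ g y w := by
    rw [hfv, fderiv_add_eq_of_add_const hgv]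
    ring
  simp_rw [integral_fderiv_apply_add_smul (hf.mul hdgw), hjump,
    intervalIntegral.integral_const_mul, integral_fderiv_apply_add_smul (hg.of_le one_le_two), hgw]
  ring

theorem integral_integral_fderiv_minor_of_add_const {f g : E → ℝ} (hf : ContDiff ℝ 1 f)
    (hg : ContDiff ℝ 2 g) {v w : E} {αv αw βv βw : ℝ} (hfv : ∀ x, f (x + v) = f x + αv)
    (hfw : ∀ x, f (x + w) = f x + αw) (hgv : ∀ x, g (x + v) = g x + βv)
    (hgw : ∀ x, g (x + w) = g x + βw) (p : E) :
    ∫ s in (0:ℝ)..1, ∫ t in (0:ℝ)..1,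
      (fderiv ℝ f (p + s • v + t • w) v * fderiv ℝ g (p + s • v + t • w) w
        - fderiv ℝ f (p + s • v + t • w) w * fderiv ℝ g (p + s • v + t • w) v)
      = αv * βw - αw * βv := by
  have hdiv (u : E) : ContDiff ℝ 1 fun x => f x * fderiv ℝ g x u :=
    hf.mul ((hg.fderiv_right (m := 1) le_rfl).clm_apply contDiff_const)
  have hcont (u u' : E) : Continuous fun q : ℝ × ℝ =>
      fderiv ℝ (fun x => f x * fderiv ℝ g x u) (p + q.1 • v + q.2 • w) u' :=
    (((hdiv u).continuous_fderiv one_ne_zero).clm_apply continuous_const).comp (by fun_prop)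
  simp_rw [fderiv_mul_fderiv_sub_fderiv_mul_fderiv (hf.differentiable one_ne_zero) hg]
  rw [intervalIntegral_integral_sub_of_continuous (hcont w v) (hcont v w),
    intervalIntegral_integral_swap_of_continuous (hcont w v) zero_le_one zero_le_one,
    integral_integral_fderiv_mul_fderiv_of_add_const hf hg hfw hgw hgv]
  simp_rw [add_right_comm p]
  rw [integral_integral_fderiv_mul_fderiv_of_add_const hf hg hfv hgv hgw]

end

theorem half_sum_leviCivita_two_mul_leviCivita (i : Fin 3) (D : Fin 3 → Fin 3 → ℝ) :
    (1 / 2) * ∑ m : Fin 3, ∑ n : Fin 3, ∑ k : Fin 3, ∑ l : Fin 3,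
      leviCivita 2 m n * leviCivita i k l * D k m * D l n
      = D (i + 1) 0 * D (i + 2) 1 - D (i + 1) 1 * D (i + 2) 0 := by
  fin_cases i <;> simp [Fin.sum_univ_three, leviCivita] <;> ring

/-- If `η : ℝ³ → ℝ³` is `C²` and `η(x) − x` is 1-periodic in `x₁` and `x₂`,
then the cofactor entries `a_{3i} = (1/2) ε_{3mn} ε_{ikl} ∂_m η_k ∂_n η_l`,
`i = 1, 2`, have vanishing average over every horizontal slice
`[0,1]² × {c}`. -/
theorem integral_cofactor_horizontal_slice_eq_zero
    (η : (Fin 3 → ℝ) → (Fin 3 → ℝ)) (hη : ContDiff ℝ 2 η)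
    (hper : ∀ (x : Fin 3 → ℝ) (m : Fin 3), m ≠ 2 →
      η (x + Pi.single m 1) - (x + Pi.single m 1) = η x - x)
    (c : ℝ) (i : Fin 3) (hi : i ≠ 2) :
    (∫ x₁ in (0:ℝ)..1, ∫ x₂ in (0:ℝ)..1,
      (1 / 2) * ∑ m : Fin 3, ∑ n : Fin 3, ∑ k : Fin 3, ∑ l : Fin 3,
        leviCivita 2 m n * leviCivita i k l *
          fderiv ℝ (fun y => η y k) ![x₁, x₂, c] (Pi.single m 1) *
          fderiv ℝ (fun y => η y l) ![x₁, x₂, c] (Pi.single n 1)) = 0 := by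
  have hη_apply (k : Fin 3) : ContDiff ℝ 2 fun y => η y k := contDiff_pi.mp hη k
  have hshift {m : Fin 3} (hm : m ≠ 2) (k : Fin 3) (x : Fin 3 → ℝ) :
      η (x + Pi.single m 1) k = η x k + (Pi.single m 1 : Fin 3 → ℝ) k := by
    have h := congrFun (hper x m hm) k
    simp only [Pi.sub_apply, Pi.add_apply] at h
    linarith
  have hslice (s t : ℝ) : ![s, t, c] = ![0, 0, c] + s • Pi.single 0 1 + t • Pi.single 1 1 := by
    funext j; fin_cases j <;> simp [Matrix.vecHead, Matrix.vecTail]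
  -- otherwise `hslice` would rewrite the `![0, 0, c]` on its own right-hand side
  generalize (![0, 0, c] : Fin 3 → ℝ) = p at hslice
  simp only [half_sum_leviCivita_two_mul_leviCivita, hslice]
  rw [integral_integral_fderiv_minor_of_add_const ((hη_apply _).of_le one_le_two) (hη_apply _)
    (hshift (by decide) _) (hshift (by decide) _) (hshift (by decide) _)
    (hshift (by decide) _)]
  fin_cases i <;> simp at hi ⊢
end
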